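/- For all n ≥ 0, the number of distinct Lyndon factors of W_n beginning with the letter 0 equals f_{n+2}; and for every odd k ≥ 1 and every n ≥ k, the number of distinct Lyndon factors of W_n beginning with the letter k equals f_{n+3-k} - 1. -/

import Mathlib

/-- The morphism `phi` on the alphabet `ℕ`: `phi (2i) = (2i)(2i+1)` and `phi (2i+1) = (2i+2)`. -/
def phi (a : ℕ) : List ℕ := if a % 2 = 0 then [a, a + 1] else [a + 1]

/-- The finite ZWW words: `W n = phi^n(0)`, so `W 0 = 0`, `W 1 = 01`, `W 2 = 012`, `W 3 = 01223`. -/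
def W (n : ℕ) : List ℕ := (fun w => w.flatMap phi)^[n] [0]

/-- A nonempty word is Lyndon if it is lexicographically strictly less than each of its
conjugates `v ++ u` where `x = u ++ v` with `u, v` nonempty. -/
def IsLyndon (x : List ℕ) : Prop :=
  x ≠ [] ∧ ∀ u v : List ℕ, u ≠ [] → v ≠ [] → x = u ++ v → List.Lex (· < ·) x (v ++ u)

/-
From `W (n + 2) = W (n + 1) ++ (W n + 2)` one gets `|W n| = f (n + 2)`, and every factor of
`W (n + 2)` is a factor of `W (n + 1)`, a factor of `W n` shifted by `2`, or contains the letter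
`2` after its first letter. In `W n` every odd letter `k` is preceded by `k - 1`.

A Lyndon word `a v` has `a` as its least letter, and conversely `a v` is Lyndon when all letters of
`v` exceed `a`. The letter `0` occurs only at the start of `W n`, so the Lyndon factors beginning
with `0` are the nonempty prefixes of `W n`. For odd `k`, a Lyndon factor `k v` cannot contain `k`
again, since the letter `k - 1` in front of the second `k` would be smaller than `k`; so all letters
of `v` exceed `k`. By induction on `n`, such factors `k v` are exactly the nonempty prefixes of
`W (n + 1 - k)` shifted by `k - 1` with its first letter dropped, a suffix of `W n` of length
`f (n + 3 - k) - 1`.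
-/

namespace List

variable {α : Type*}

theorem cons_prefix_of_cons_infix_append {a : α} {v w₁ w₂ : List α}
    (h : a :: v <:+: w₁ ++ a :: w₂) (h₁ : a ∉ w₁) (h₂ : a ∉ w₂) : a :: v <+: a :: w₂ := by
  rcases infix_append_iff_ne_nil.mp h with h | h | ⟨l₁, l₂, hl₁, -, hv, hs, -⟩
  · exact absurd (h.subset mem_cons_self) h₁
  · rcases infix_cons_iff.mp h with h | h
    · exact h
    · exact absurd (h.subset mem_cons_self) h₂
  · obtain ⟨b, l₁, rfl⟩ := exists_cons_of_ne_nil hl₁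
    obtain rfl : b = a := (cons_append .. ▸ hv |> cons.inj).1.symm
    exact absurd (hs.subset mem_cons_self) h₁

theorem infix_or_mem_tail_of_infix_append_cons {u x y : List α} {c : α}
    (h : u <:+: x ++ c :: y) : u <:+: x ∨ u <:+: c :: y ∨ c ∈ u.tail := by
  rcases infix_append_iff_ne_nil.mp h with h | h | ⟨l₁, l₂, hl₁, hl₂, rfl, -, hp⟩
  · exact .inl h
  · exact .inr (.inl h)
  · obtain ⟨b, l₁, rfl⟩ := exists_cons_of_ne_nil hl₁
    obtain ⟨s, rfl, -⟩ := (prefix_cons_iff.mp hp).resolve_left hl₂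
    simp

theorem IsPrefix.tail {l₁ l₂ : List α} (h : l₁ <+: l₂) : l₁.tail <+: l₂.tail := by
  obtain ⟨s, rfl⟩ := h
  cases l₁ <;> simp

theorem ncard_setOf_prefix_ne_nil (S : List α) :
    {u : List α | u <+: S ∧ u ≠ []}.ncard = S.length := by
  have hS : {u : List α | u <+: S ∧ u ≠ []} = (fun i => S.take (i + 1)) '' Set.Iio S.length := by
    ext u
    constructor
    · rintro ⟨hu, hne⟩
      have := length_pos_iff.mpr hne
      refine ⟨u.length - 1, by have := hu.length_le; simp; omega, ?_⟩
      simp only [Nat.sub_add_cancel this]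
      exact (prefix_iff_eq_take.mp hu).symm
    · rintro ⟨i, hi, rfl⟩
      exact ⟨take_prefix _ _, ne_nil_of_length_pos (by simp at hi ⊢; omega)⟩
  rw [hS, Set.InjOn.ncard_image, Set.ncard_Iio_nat]
  intro i hi j hj hij
  have := congrArg length hij
  simp only [Set.mem_Iio, length_take] at hi hj this
  omega

end List

theorem IsLyndon.head_le {a : ℕ} {v : List ℕ} (h : IsLyndon (a :: v)) : ∀ b ∈ v, a ≤ b := by
  intro b hb
  obtain ⟨x, y, rfl⟩ := List.append_of_mem hb
  have hlex := h.2 (a :: x) (b :: y) (by simp) (by simp) (by simp)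
  rw [List.cons_append] at hlex
  cases hlex with
  | cons => exact le_rfl
  | rel hab => exact hab.le

theorem isLyndon_cons_of_forall_lt {a : ℕ} {t : List ℕ} (ht : ∀ b ∈ t, a < b) :
    IsLyndon (a :: t) := by
  refine ⟨List.cons_ne_nil _ _, ?_⟩
  rintro (_ | ⟨c, u⟩) (_ | ⟨d, v⟩) hu hv huv
  all_goals simp only [ne_eq, not_true_eq_false] at hu hv
  obtain ⟨rfl, rfl⟩ := List.cons.inj huv
  exact List.Lex.rel (ht d (by simp))

theorem setOf_lyndon_infix_head_eq {w t : List ℕ} {a : ℕ} (hsub : a :: t <:+: w)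
    (ht : ∀ b ∈ t, a < b) (hpre : ∀ v, a :: v <:+: w → IsLyndon (a :: v) → a :: v <+: a :: t) :
    {u | u <:+: w ∧ IsLyndon u ∧ u.head? = some a} = {u | u <+: a :: t ∧ u ≠ []} := by
  ext u
  constructor
  · rintro ⟨hu, hL, hhead⟩
    obtain ⟨v, rfl⟩ : ∃ v, u = a :: v := List.head?_eq_some_iff.mp hhead
    exact ⟨hpre v hu hL, List.cons_ne_nil _ _⟩
  · rintro ⟨hu, hne⟩
    obtain ⟨v, rfl, hv⟩ := (List.prefix_cons_iff.mp hu).resolve_left hne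
    exact ⟨hu.isInfix.trans hsub, isLyndon_cons_of_forall_lt fun b hb => ht b (hv.subset hb), rfl⟩

theorem phi_add_two (a : ℕ) : phi (a + 2) = (phi a).map (· + 2) := by
  unfold phi
  split_ifs <;> simp_all [Nat.add_mod_right]

theorem flatMap_phi_map_add_two (l : List ℕ) :
    (l.map (· + 2)).flatMap phi = (l.flatMap phi).map (· + 2) := by
  induction l with
  | nil => rfl
  | cons a l ih => simp [phi_add_two, ih]

theorem W_succ (n : ℕ) : W (n + 1) = (W n).flatMap phi :=
  Function.iterate_succ_apply' _ n _

theorem W_add_two (n : ℕ) : W (n + 2) = W (n + 1) ++ (W n).map (· + 2) := by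
  induction n with
  | zero => rfl
  | succ n ih =>
    rw [W_succ (n + 2), ih, List.flatMap_append, flatMap_phi_map_add_two, ← W_succ, ← W_succ, ih]

theorem length_W (n : ℕ) : (W n).length = Nat.fib (n + 2) := by
  induction n using Nat.twoStepInduction with
  | zero => rfl
  | one => rfl
  | more n ih₀ ih₁ =>
    rw [W_add_two, List.length_append, List.length_map, ih₀, ih₁, Nat.fib_add_two (n := n + 2)]
    ring_nf

theorem W_succ_eq_cons (n : ℕ) : ∃ r, W (n + 1) = 0 :: 1 :: r ∧ ∀ b ∈ r, 2 ≤ b := by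
  induction n with
  | zero => exact ⟨[], rfl, by simp⟩
  | succ n ih =>
    obtain ⟨r, hr, hr2⟩ := ih
    refine ⟨r ++ (W n).map (· + 2), by rw [W_add_two, hr]; rfl, ?_⟩
    simp only [List.mem_append, List.mem_map]
    rintro b (hb | ⟨c, -, rfl⟩)
    exacts [hr2 b hb, by omega]

theorem W_eq_cons (n : ℕ) : ∃ t, W n = 0 :: t ∧ ∀ b ∈ t, 0 < b := by
  cases n with
  | zero => exact ⟨[], rfl, by simp⟩
  | succ n =>
    obtain ⟨r, hr, hr2⟩ := W_succ_eq_cons n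
    refine ⟨1 :: r, hr, ?_⟩
    simp only [List.mem_cons]
    rintro b (rfl | hb)
    exacts [one_pos, by have := hr2 b hb; omega]

theorem W_prefix_W_of_le {m n : ℕ} (h : m ≤ n) : W m <+: W n := by
  induction n, h using Nat.le_induction with
  | base => exact List.prefix_rfl
  | succ n _ ih =>
    refine ih.trans ?_
    cases n with
    | zero => exact ⟨[1], rfl⟩
    | succ n => rw [W_add_two]; exact List.prefix_append _ _

theorem infix_W_add_two {u : List ℕ} {n : ℕ} (h : u <:+: W (n + 2)) :
    u <:+: W (n + 1) ∨ (∃ u', u' <:+: W n ∧ u = u'.map (· + 2)) ∨ 2 ∈ u.tail := by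
  obtain ⟨t, ht, -⟩ := W_eq_cons n
  have hsplit : W (n + 2) = W (n + 1) ++ 2 :: t.map (· + 2) := by rw [W_add_two, ht]; rfl
  rw [hsplit] at h
  rcases List.infix_or_mem_tail_of_infix_append_cons h with h | h | h
  · exact .inl h
  · refine .inr (.inl (List.infix_map_iff.mp ?_))
    rwa [ht]
  · exact .inr (.inr h)

theorem add_one_eq_of_pair_infix_W {a b n : ℕ} (h : [a, b] <:+: W n) (hb : Odd b) : a + 1 = b := by
  induction n using Nat.twoStepInduction generalizing a b with
  | zero => simpa [W] using h.length_le
  | one =>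
    have hab : [a, b] = [0, 1] := h.eq_of_length rfl
    simp_all
  | more n ih₀ ih₁ =>
    rcases infix_W_add_two h with h | ⟨u', hu', hu⟩ | h2
    · exact ih₁ h hb
    · match u', hu with
      | [a', b'], hu =>
        obtain ⟨rfl, rfl⟩ : a = a' + 2 ∧ b = b' + 2 := by simpa using hu
        have := ih₀ hu' (Nat.odd_add.mp hb |>.mpr even_two)
        omega
    · obtain rfl : b = 2 := by simpa [eq_comm] using h2
      exact absurd hb (by decide)

def shiftedTail (n j : ℕ) : List ℕ := (W (n - 2 * j)).tail.map (· + 2 * j)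

theorem shiftedTail_zero_right (n : ℕ) : shiftedTail n 0 = (W n).tail := by
  simp [shiftedTail]

theorem shiftedTail_prefix_succ (n j : ℕ) : shiftedTail n j <+: shiftedTail (n + 1) j :=
  ((W_prefix_W_of_le (by omega)).tail).map _

theorem map_shiftedTail (n j : ℕ) :
    (shiftedTail n j).map (· + 2) = shiftedTail (n + 2) (j + 1) := by
  simp only [shiftedTail, List.map_map, Function.comp_def]
  rw [show n + 2 - 2 * (j + 1) = n - 2 * j by omega]
  simp only [add_assoc, mul_add, mul_one]

theorem shiftedTail_suffix_W (n j : ℕ) : shiftedTail n j <:+ W n := by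
  induction j generalizing n with
  | zero => simpa [shiftedTail_zero_right] using List.tail_suffix _
  | succ j ih =>
    match n with
    | 0 | 1 =>
      rw [shiftedTail, Nat.sub_eq_zero_of_le (by omega)]
      simp [W]
    | n + 2 =>
      rw [← map_shiftedTail, W_add_two]
      exact ((ih n).map _).trans (List.suffix_append _ _)

theorem length_shiftedTail (n j : ℕ) :
    (shiftedTail n j).length = Nat.fib (n - 2 * j + 2) - 1 := by
  simp [shiftedTail, length_W]

theorem shiftedTail_eq_cons {n j : ℕ} (h : 2 * j + 1 ≤ n) :
    ∃ r, shiftedTail n j = (2 * j + 1) :: r ∧ ∀ b ∈ r, 2 * j + 1 < b := by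
  obtain ⟨r, hr, hr2⟩ := W_succ_eq_cons (n - 2 * j - 1)
  rw [show n - 2 * j - 1 + 1 = n - 2 * j by omega] at hr
  refine ⟨r.map (· + 2 * j), by simp [shiftedTail, hr, add_comm], ?_⟩
  simp only [List.mem_map]
  rintro _ ⟨b, hb, rfl⟩
  have := hr2 b hb
  omega

theorem cons_prefix_tail_W_of_infix {v : List ℕ} {n : ℕ} (h : 1 :: v <:+: W n) :
    1 :: v <+: (W n).tail := by
  cases n with
  | zero => simpa [W] using h.subset List.mem_cons_self
  | succ n =>
    obtain ⟨r, hr, hr2⟩ := W_succ_eq_cons n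
    rw [hr] at h ⊢
    exact List.cons_prefix_of_cons_infix_append (w₁ := [0]) h (by simp)
      fun h1 => by have := hr2 1 h1; omega

theorem prefix_shiftedTail_of_infix_W {n j : ℕ} {v : List ℕ} (h : (2 * j + 1) :: v <:+: W n)
    (hv : ∀ b ∈ v, 2 * j + 1 < b) : (2 * j + 1) :: v <+: shiftedTail n j := by
  induction n using Nat.strong_induction_on generalizing j v with
  | _ n ih =>
    rcases j with _ | j
    · simpa [shiftedTail_zero_right] using cons_prefix_tail_W_of_infix h
    match n with
    | 0 => simpa [W] using h.subset List.mem_cons_self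
    | 1 =>
      have : 2 * (j + 1) + 1 ∈ [0, 1] := h.subset List.mem_cons_self
      simp at this
    | n + 2 =>
      rcases infix_W_add_two h with h | ⟨u', hu', hu⟩ | h2
      · exact (ih (n + 1) (by omega) h hv).trans (shiftedTail_prefix_succ _ _)
      · match u', hu with
        | c :: v', hu =>
          simp only [List.map_cons, List.cons.injEq] at hu
          obtain ⟨hc, rfl⟩ := hu
          obtain rfl : c = 2 * j + 1 := by omega
          have hv' : ∀ b ∈ v', 2 * j + 1 < b := fun b hb => by
            have := hv (b + 2) (List.mem_map_of_mem hb); omega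
          have := (ih n (by omega) hu' hv').map (· + 2)
          rwa [map_shiftedTail, List.map_cons] at this
      · have := hv 2 h2
        omega

theorem forall_lt_of_isLyndon_of_infix_W {k n : ℕ} {v : List ℕ} (hk : Odd k)
    (h : k :: v <:+: W n) (hL : IsLyndon (k :: v)) : ∀ b ∈ v, k < b := by
  have hle := hL.head_le
  have hkv : k ∉ v := by
    intro hkv
    obtain ⟨x, y, rfl⟩ := List.append_of_mem hkv
    obtain ⟨x', c, hx⟩ := (k :: x).eq_nil_or_concat.resolve_left (List.cons_ne_nil _ _)
    have hpair : [c, k] <:+: W n := by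
      refine List.IsInfix.trans ⟨x', y, ?_⟩ h
      rw [← List.cons_append, hx]
      simp
    have hc := add_one_eq_of_pair_infix_W hpair hk
    have hcx : c ∈ k :: x := by simp [hx]
    rcases List.mem_cons.mp hcx with rfl | hcx
    · omega
    · have := hle c (List.mem_append_left _ hcx)
      omega
  exact fun b hb => (hle b hb).lt_of_ne fun hkb => hkv (hkb ▸ hb)

/-- The number of distinct Lyndon factors of `W n` beginning with the letter `0`
is `f (n+2)`; and for every odd `k ≥ 1` and every `n ≥ k`, the number of distinct
Lyndon factors of `W n` beginning with the letter `k` is `f (n+3-k) - 1`. -/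
theorem zww_lyndon_count_zero_odd :
    (∀ n : ℕ, {u : List ℕ | u <:+: W n ∧ IsLyndon u ∧ u.head? = some 0}.ncard =
      Nat.fib (n + 2)) ∧
    (∀ k n : ℕ, Odd k → 1 ≤ k → k ≤ n →
      {u : List ℕ | u <:+: W n ∧ IsLyndon u ∧ u.head? = some k}.ncard =
        Nat.fib (n + 3 - k) - 1) := by
  refine ⟨fun n => ?_, fun k n hk _ hkn => ?_⟩
  · obtain ⟨t, ht, ht0⟩ := W_eq_cons n
    have hpre (v : List ℕ) (hv : 0 :: v <:+: W n) : 0 :: v <+: 0 :: t := by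
      rw [ht] at hv
      exact List.cons_prefix_of_cons_infix_append (w₁ := []) hv List.not_mem_nil
        fun h0 => (ht0 0 h0).false
    rw [setOf_lyndon_infix_head_eq (ht ▸ List.infix_rfl) ht0 fun v hv _ => hpre v hv,
      List.ncard_setOf_prefix_ne_nil, ← ht, length_W]
  · obtain ⟨j, rfl⟩ := hk
    obtain ⟨r, hr, hr_gt⟩ := shiftedTail_eq_cons hkn
    have hpre (v : List ℕ) (hv : (2 * j + 1) :: v <:+: W n) (hL : IsLyndon ((2 * j + 1) :: v)) :
        (2 * j + 1) :: v <+: (2 * j + 1) :: r :=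
      hr ▸ prefix_shiftedTail_of_infix_W hv (forall_lt_of_isLyndon_of_infix_W ⟨j, rfl⟩ hv hL)
    rw [setOf_lyndon_infix_head_eq (hr ▸ (shiftedTail_suffix_W n j).isInfix) hr_gt hpre,
      List.ncard_setOf_prefix_ne_nil, ← hr, length_shiftedTail]
    congr 2
    omega
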